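/- (Theorem 5.4, zero-range system, open-closed network, detailed balance) Fix N ∈ ℕ. Suppose the symmetry conditions hold: β_{kl}(n_k,n_l;y) = β_{lk}(n_l+1,n_k−1;y) for k ≠ l, y_k = y_l = 0, n_k ≥ 1; θ_{jk}(n_j,n_k;y) = θ_{kj}(n_k+1,n_j−1;y) for y_j ≥ 1, y_k = 0, n_j ≥ 1; (5.8) ε_{ij}(n_i,n_j;y)·[γ_i(n_i−1)]^{y_i} = [γ_j(n_j)]^{y_j}·ε_{ji}(n_j+1,n_i−1;y) for i ≠ j, y_i ≥ 1, y_j ≥ 1, n_i ≥ 1; and (4.11) τ_{jj'}(n;y)·ξ_j/η_j = τ_{j'j}(n;y+e^{j→j'})·ξ_{j'}/η_{j'} for y_j ≥ 1, j' ≠ j. Then on {(y,n) : |n| = N} the weight w(y,n) = ∏_{q∈Λ} [ξ_q γ̄_q(n_q)/η_q]^{y_q} satisfies the detailed balance equations: (i) w(y,n)·β_{kl}(n_k,n_l;y) = w(y, n+e^{k→l})·β_{lk}(n_l+1,n_k−1;y) for y_k = y_l = 0, k ≠ l, n_k ≥ 1; (ii) w(y,n)·ε_{ij}(n_i,n_j;y)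 = w(y, n+e^{i→j})·ε_{ji}(n_j+1,n_i−1;y) for y_i ≥ 1, y_j ≥ 1, i ≠ j, n_i ≥ 1; (iii) w(y,n)·θ_{jk}(n_j,n_k;y) = w(y, n+e^{j→k})·θ_{kj}(n_k+1,n_j−1;y)·[γ_j(n_j−1)]^{y_j} for y_j ≥ 1, y_k = 0, n_j ≥ 1; (iv) w(y,n)·θ_{kj}(n_k,n_j;y)·[γ_j(n_j)]^{y_j} = w(y, n+e^{k→j})·θ_{jk}(n_j+1,n_k−1;y) for y_j ≥ 1, y_k = 0, n_k ≥ 1; (v) w(y,n)·[γ̄_j(n_j)]^{−y_j}·τ_{jj'}(n;y)·[γ̄_{j'}(n_{j'})]^{−y_{j'}} = w(y', n)·[γ̄_j(n_j)]^{−y'_j}·τ_{j'j}(n;y')·[γ̄_{j'}(n_{j'})]^{−y'_{j'}}, where y' = y + e^{j→j'}, for y_j ≥ 1, j' ≠ j; (vi) w(y,n)·ξ_p γ̄_p(n_p) = w(y+e^p, n)·η_p for every p ∈ Λ. -/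

import Mathlib

/-- The `e^k` configuration increment: `n + e^k`. -/
def bump {Λ : Type*} [DecidableEq Λ] (n : Λ → ℕ) (k : Λ) : Λ → ℕ :=
  fun l => n l + (if l = k then 1 else 0)

/-- The jump move `n + e^{i→k} = n - e^i + e^k`. -/
def move {Λ : Type*} [DecidableEq Λ] (n : Λ → ℕ) (i k : Λ) : Λ → ℕ :=
  fun l => n l - (if l = i then 1 else 0) + (if l = k then 1 else 0)

/-!
The weight is a product of one-site factors `φ_q(n_q)^{y_q}` with
`φ_q(m) = ξ_q γ̄_q(m) / η_q`. A move `n + e^{i→k}` changes only the factors at `i` and `k`,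
and `γ̄_q(m + 1) = γ̄_q(m) γ_q(m)`, so the weight ratio across a task jump is
`γ_k(n_k)^{y_k} / γ_i(n_i - 1)^{y_i}`; a move `y + e^{j→j'}` of a distinguished customer
multiplies the weight by `φ_{j'}(n_{j'}) / φ_j(n_j)`, and an arrival at `p` by `φ_p(n_p)`.
Each balance equation is then one of these ratios combined with the matching symmetry
condition on the rates.
-/

section Moves

variable {Λ : Type*} [DecidableEq Λ]

lemma move_apply_left (n : Λ → ℕ) {i k : Λ} (hik : i ≠ k) : move n i k i = n i - 1 := by
  simp [move, hik]

lemma move_apply_right (n : Λ → ℕ) {i k : Λ} (hik : i ≠ k) : move n i k k = n k + 1 := by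
  simp [move, hik.symm]

lemma move_apply_of_ne (n : Λ → ℕ) {i k q : Λ} (hqi : q ≠ i) (hqk : q ≠ k) :
    move n i k q = n q := by
  simp [move, hqi, hqk]

lemma bump_apply_self (n : Λ → ℕ) (p : Λ) : bump n p p = n p + 1 := by
  simp [bump]

lemma bump_apply_of_ne (n : Λ → ℕ) {p q : Λ} (hqp : q ≠ p) : bump n p q = n q := by
  simp [bump, hqp]

end Moves

section Products

variable {Λ M : Type*} [Fintype Λ] [DecidableEq Λ] [CommMonoid M]

lemma Fintype.prod_eq_prod_mul_of_eq_of_ne {f g : Λ → M} (p : Λ) {b : M}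
    (hp : f p = g p * b) (hne : ∀ q, q ≠ p → f q = g q) :
    ∏ q, f q = (∏ q, g q) * b := by
  rw [← Finset.mul_prod_erase _ f (Finset.mem_univ p),
    ← Finset.mul_prod_erase _ g (Finset.mem_univ p),
    Finset.prod_congr rfl fun q hq => hne q (Finset.mem_erase.1 hq).1, hp]
  ac_rfl

lemma Fintype.prod_mul_eq_prod_mul_of_eq_of_ne_of_ne {f g : Λ → M} {i k : Λ} (hik : i ≠ k)
    {a b : M} (hi : f i * a = g i) (hk : f k = g k * b)
    (hne : ∀ q, q ≠ i → q ≠ k → f q = g q) :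
    (∏ q, f q) * a = (∏ q, g q) * b := by
  have hk_mem : k ∈ Finset.univ.erase i := Finset.mem_erase.2 ⟨hik.symm, Finset.mem_univ k⟩
  rw [← Finset.mul_prod_erase _ f (Finset.mem_univ i), ← Finset.mul_prod_erase _ f hk_mem,
    ← Finset.mul_prod_erase _ g (Finset.mem_univ i), ← Finset.mul_prod_erase _ g hk_mem,
    Finset.prod_congr rfl fun q hq => by
      obtain ⟨hqk, hqi, -⟩ := Finset.mem_erase.1 hq |>.imp_right Finset.mem_erase.1
      exact hne q hqi hqk,
    ← hi, hk]
  ac_rfl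

end Products

section ProductWeight

variable {Λ M : Type*} [Fintype Λ] [DecidableEq Λ]

def productWeight [CommMonoid M] (φ : Λ → ℕ → M) (y n : Λ → ℕ) : M :=
  ∏ q, φ q (n q) ^ y q

lemma productWeight_move_mul [CommMonoid M] {φ g : Λ → ℕ → M}
    (hφ : ∀ q m, φ q (m + 1) = φ q m * g q m) (y : Λ → ℕ) {n : Λ → ℕ} {i k : Λ}
    (hik : i ≠ k) (hi : 1 ≤ n i) :
    productWeight φ y (move n i k) * g i (n i - 1) ^ y i =
      productWeight φ y n * g k (n k) ^ y k := by
  refine Fintype.prod_mul_eq_prod_mul_of_eq_of_ne_of_ne hik ?_ ?_ fun q hqi hqk => ?_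
  · rw [move_apply_left n hik, ← mul_pow, ← hφ, Nat.sub_add_cancel hi]
  · rw [move_apply_right n hik, hφ, mul_pow]
  · rw [move_apply_of_ne n hqi hqk]

lemma productWeight_move_of_eq_zero [CommMonoid M] (φ : Λ → ℕ → M) {y : Λ → ℕ}
    (n : Λ → ℕ) {i k : Λ} (hyi : y i = 0) (hyk : y k = 0) :
    productWeight φ y (move n i k) = productWeight φ y n := by
  refine Finset.prod_congr rfl fun q _ => ?_
  by_cases hqi : q = i
  · subst hqi; simp [hyi]
  by_cases hqk : q = k
  · subst hqk; simp [hyk]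
  rw [move_apply_of_ne n hqi hqk]

lemma productWeight_move_exp_mul [CommMonoid M] (φ : Λ → ℕ → M) {y : Λ → ℕ} (n : Λ → ℕ)
    {j j' : Λ} (hjj' : j ≠ j') (hj : 1 ≤ y j) :
    productWeight φ (move y j j') n * φ j (n j) = productWeight φ y n * φ j' (n j') := by
  refine Fintype.prod_mul_eq_prod_mul_of_eq_of_ne_of_ne hjj' ?_ ?_ fun q hqj hqj' => ?_
  · rw [move_apply_left y hjj', ← pow_succ, Nat.sub_add_cancel hj]
  · rw [move_apply_right y hjj', pow_succ]
  · rw [move_apply_of_ne y hqj hqj']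

lemma productWeight_bump [CommMonoid M] (φ : Λ → ℕ → M) (y n : Λ → ℕ) (p : Λ) :
    productWeight φ (bump y p) n = productWeight φ y n * φ p (n p) :=
  Fintype.prod_eq_prod_mul_of_eq_of_ne p (by rw [bump_apply_self, pow_succ])
    fun q hqp => by rw [bump_apply_of_ne y hqp]

lemma productWeight_leap_balance [Field M] {ξ η : Λ → M} {Γ : Λ → ℕ → M}
    (hξ : ∀ q, ξ q ≠ 0) (hη : ∀ q, η q ≠ 0) (hΓ : ∀ q m, Γ q m ≠ 0) {y : Λ → ℕ} (n : Λ → ℕ)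
    {j j' : Λ} (hj : 1 ≤ y j) (hjj' : j' ≠ j) {τ τ' : M}
    (hτ : τ * ξ j / η j = τ' * ξ j' / η j') :
    productWeight (fun q m => ξ q * Γ q m / η q) y n * (Γ j (n j) ^ y j)⁻¹ * τ *
        (Γ j' (n j') ^ y j')⁻¹ =
      productWeight (fun q m => ξ q * Γ q m / η q) (move y j j') n *
        (Γ j (n j) ^ move y j j' j)⁻¹ * τ' * (Γ j' (n j') ^ move y j j' j')⁻¹ := by
  set W := productWeight fun q m => ξ q * Γ q m / η q
  have hW := productWeight_move_exp_mul (fun q m => ξ q * Γ q m / η q) n hjj'.symm hj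
  field_simp [hξ j, hη j, hη j'] at hW hτ
  have key : τ * W y n * Γ j' (n j') = τ' * Γ j (n j) * W (move y j j') n := by
    apply mul_right_cancel₀ (mul_ne_zero (hξ j) (hη j'))
    linear_combination W y n * Γ j' (n j') * hτ - τ' * hW
  obtain ⟨a, ha⟩ : ∃ a, y j = a + 1 := ⟨y j - 1, (Nat.sub_add_cancel hj).symm⟩
  rw [move_apply_left y hjj'.symm, move_apply_right y hjj'.symm, ha, Nat.add_sub_cancel]
  field_simp [hΓ j (n j), hΓ j' (n j')]
  linear_combination Γ j (n j) ^ a * Γ j' (n j') ^ y j' * key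

end ProductWeight

theorem zero_range_open_closed_detailed_balance_general
    (Λ : Type*) [Fintype Λ] [DecidableEq Λ] (N : ℕ)
    (gam : Λ → ℕ → ℝ)
    (hgam : ∀ p m, 0 < gam p m)
    (gamBar : Λ → ℕ → ℝ)
    (hgamBar : ∀ p m, gamBar p m = ∏ u ∈ Finset.range m, gam p u)
    (β θ ε : Λ → Λ → ℕ → ℕ → (Λ → ℕ) → ℝ) (τ : Λ → Λ → (Λ → ℕ) → (Λ → ℕ) → ℝ)
    (ξ η : Λ → ℝ) (hξ : ∀ p, 0 < ξ p) (hη : ∀ p, 0 < η p)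
    -- symmetry conditions
    (hβ : ∀ (y : Λ → ℕ) (k l : Λ) (a b : ℕ),
      k ≠ l → y k = 0 → y l = 0 → 1 ≤ a →
      β k l a b y = β l k (b + 1) (a - 1) y)
    (hθ : ∀ (y : Λ → ℕ) (j k : Λ) (a b : ℕ),
      1 ≤ y j → y k = 0 → 1 ≤ a →
      θ j k a b y = θ k j (b + 1) (a - 1) y)
    -- (5.8)
    (hε : ∀ (y : Λ → ℕ) (i j : Λ) (a b : ℕ),
      i ≠ j → 1 ≤ y i → 1 ≤ y j → 1 ≤ a →
      ε i j a b y * gam i (a - 1) ^ (y i) =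
        gam j b ^ (y j) * ε j i (b + 1) (a - 1) y)
    -- (4.11)
    (h411 : ∀ (y : Λ → ℕ) (j j' : Λ) (n : Λ → ℕ),
      1 ≤ y j → j' ≠ j →
      τ j j' n y * ξ j / η j = τ j' j n (move y j j') * ξ j' / η j')
    (w : (Λ → ℕ) → (Λ → ℕ) → ℝ)
    (hw : ∀ (y n : Λ → ℕ), w y n =
      ∏ q, (ξ q * gamBar q (n q) / η q) ^ (y q)) :
    ∀ (y : Λ → ℕ) (n : Λ → ℕ), ∑ s, n s = N →
      -- (i) task jump between unloaded sites
      (∀ k l, y k = 0 → y l = 0 → k ≠ l → 1 ≤ n k →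
        w y n * β k l (n k) (n l) y =
          w y (move n k l) * β l k (n l + 1) (n k - 1) y) ∧
      -- (ii) task jump between loaded sites
      (∀ i j, 1 ≤ y i → 1 ≤ y j → i ≠ j → 1 ≤ n i →
        w y n * ε i j (n i) (n j) y =
          w y (move n i j) * ε j i (n j + 1) (n i - 1) y) ∧
      -- (iii) task jump from a loaded to an unloaded site
      (∀ j k, 1 ≤ y j → y k = 0 → 1 ≤ n j →
        w y n * θ j k (n j) (n k) y =
          w y (move n j k) *
            (θ k j (n k + 1) (n j - 1) y * gam j (n j - 1) ^ (y j))) ∧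
      -- (iv) task jump from an unloaded to a loaded site
      (∀ j k, 1 ≤ y j → y k = 0 → 1 ≤ n k →
        w y n * (θ k j (n k) (n j) y * gam j (n j) ^ (y j)) =
          w y (move n k j) * θ j k (n j + 1) (n k - 1) y) ∧
      -- (v) leap of a distinguished customer
      (∀ j j', 1 ≤ y j → j' ≠ j →
        w y n * (gamBar j (n j) ^ (y j))⁻¹ * τ j j' n y *
            (gamBar j' (n j') ^ (y j'))⁻¹ =
          w (move y j j') n * (gamBar j (n j) ^ (move y j j' j))⁻¹ *
            τ j' j n (move y j j') *
            (gamBar j' (n j') ^ (move y j j' j'))⁻¹) ∧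
      -- (vi) arrival of a distinguished customer paired with its exit
      (∀ p, w y n * (ξ p * gamBar p (n p)) = w (bump y p) n * η p) := by
  intro y n _
  set φ : Λ → ℕ → ℝ := fun q m => ξ q * gamBar q m / η q
  obtain rfl : w = productWeight φ := funext₂ hw
  have hΓ : ∀ p m, gamBar p m ≠ 0 := fun p m => by
    rw [hgamBar]; exact (Finset.prod_pos fun u _ => hgam p u).ne'
  have hφ : ∀ q m, φ q (m + 1) = φ q m * gam q m := fun q m => by
    simp only [φ, hgamBar, Finset.prod_range_succ]; ring
  refine ⟨?_, ?_, ?_, ?_, ?_, ?_⟩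
  · intro k l hyk hyl hkl hnk
    rw [productWeight_move_of_eq_zero φ n hyk hyl, hβ y k l (n k) (n l) hkl hyk hyl hnk]
  · intro i j hyi hyj hij hni
    apply mul_right_cancel₀ (pow_ne_zero (y i) (hgam i (n i - 1)).ne')
    linear_combination productWeight φ y n * hε y i j (n i) (n j) hij hyi hyj hni -
      ε j i (n j + 1) (n i - 1) y * productWeight_move_mul hφ y hij hni
  · intro j k hyj hyk hnj
    have h := productWeight_move_mul hφ y (k := k) (by rintro rfl; omega) hnj
    rw [hyk, pow_zero, mul_one] at h
    rw [hθ y j k (n j) (n k) hyj hyk hnj, ← h]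
    ring
  · intro j k hyj hyk hnk
    have h := productWeight_move_mul hφ y (k := j) (by rintro rfl; omega) hnk
    rw [hyk, pow_zero, mul_one] at h
    have hθ' := hθ y j k (n j + 1) (n k - 1) hyj hyk (by omega)
    rw [Nat.sub_add_cancel hnk, Nat.add_sub_cancel] at hθ'
    rw [← hθ', h]
    ring
  · intro j j' hyj hjj'
    exact productWeight_leap_balance (fun q => (hξ q).ne') (fun q => (hη q).ne') hΓ n hyj hjj'
      (h411 y j j' n hyj hjj')
  · intro p
    rw [productWeight_bump, mul_assoc]
    exact congrArg _ (div_mul_cancel₀ _ (hη p).ne').symm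

/-- Theorem 5.4, zero-range system, open-closed network, detailed
balance: under the symmetry conditions (including (5.8) and (4.11)), on
`{(y,n) : |n| = N}` the weights `w(y,n) = ∏_q [ξ_q γ̄_q(n_q)/η_q]^{y_q}` satisfy
detailed balance. Here `y : Λ → ℕ` counts distinguished customers per site. -/
theorem zero_range_open_closed_detailed_balance
    (Λ : Type*) [Fintype Λ] [DecidableEq Λ] [Nonempty Λ] (N : ℕ)
    (gam : Λ → ℕ → ℝ)
    (hgam : ∀ p m, 0 < gam p m) (hgam0 : ∀ p, gam p 0 = 1)
    (gamBar : Λ → ℕ → ℝ)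
    (hgamBar : ∀ p m, gamBar p m = ∏ u ∈ Finset.range m, gam p u)
    (β θ ε : Λ → Λ → ℕ → ℕ → (Λ → ℕ) → ℝ) (τ : Λ → Λ → (Λ → ℕ) → (Λ → ℕ) → ℝ)
    (hβnn : ∀ k l a b y, 0 ≤ β k l a b y) (hθnn : ∀ j k a b y, 0 ≤ θ j k a b y)
    (hεnn : ∀ i j a b y, 0 ≤ ε i j a b y) (hτnn : ∀ j j' n y, 0 ≤ τ j j' n y)
    (ξ η : Λ → ℝ) (hξ : ∀ p, 0 < ξ p) (hη : ∀ p, 0 < η p)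
    -- symmetry conditions
    (hβ : ∀ (y : Λ → ℕ) (k l : Λ) (a b : ℕ),
      k ≠ l → y k = 0 → y l = 0 → 1 ≤ a →
      β k l a b y = β l k (b + 1) (a - 1) y)
    (hθ : ∀ (y : Λ → ℕ) (j k : Λ) (a b : ℕ),
      1 ≤ y j → y k = 0 → 1 ≤ a →
      θ j k a b y = θ k j (b + 1) (a - 1) y)
    -- (5.8)
    (hε : ∀ (y : Λ → ℕ) (i j : Λ) (a b : ℕ),
      i ≠ j → 1 ≤ y i → 1 ≤ y j → 1 ≤ a →
      ε i j a b y * gam i (a - 1) ^ (y i) =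
        gam j b ^ (y j) * ε j i (b + 1) (a - 1) y)
    -- (4.11)
    (h411 : ∀ (y : Λ → ℕ) (j j' : Λ) (n : Λ → ℕ),
      1 ≤ y j → j' ≠ j →
      τ j j' n y * ξ j / η j = τ j' j n (move y j j') * ξ j' / η j')
    (w : (Λ → ℕ) → (Λ → ℕ) → ℝ)
    (hw : ∀ (y n : Λ → ℕ), w y n =
      ∏ q, (ξ q * gamBar q (n q) / η q) ^ (y q)) :
    ∀ (y : Λ → ℕ) (n : Λ → ℕ), ∑ s, n s = N →
      -- (i) task jump between unloaded sites
      (∀ k l, y k = 0 → y l = 0 → k ≠ l → 1 ≤ n k →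
        w y n * β k l (n k) (n l) y =
          w y (move n k l) * β l k (n l + 1) (n k - 1) y) ∧
      -- (ii) task jump between loaded sites
      (∀ i j, 1 ≤ y i → 1 ≤ y j → i ≠ j → 1 ≤ n i →
        w y n * ε i j (n i) (n j) y =
          w y (move n i j) * ε j i (n j + 1) (n i - 1) y) ∧
      -- (iii) task jump from a loaded to an unloaded site
      (∀ j k, 1 ≤ y j → y k = 0 → 1 ≤ n j →
        w y n * θ j k (n j) (n k) y =
          w y (move n j k) *
            (θ k j (n k + 1) (n j - 1) y * gam j (n j - 1) ^ (y j))) ∧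
      -- (iv) task jump from an unloaded to a loaded site
      (∀ j k, 1 ≤ y j → y k = 0 → 1 ≤ n k →
        w y n * (θ k j (n k) (n j) y * gam j (n j) ^ (y j)) =
          w y (move n k j) * θ j k (n j + 1) (n k - 1) y) ∧
      -- (v) leap of a distinguished customer
      (∀ j j', 1 ≤ y j → j' ≠ j →
        w y n * (gamBar j (n j) ^ (y j))⁻¹ * τ j j' n y *
            (gamBar j' (n j') ^ (y j'))⁻¹ =
          w (move y j j') n * (gamBar j (n j) ^ (move y j j' j))⁻¹ *
            τ j' j n (move y j j') *
            (gamBar j' (n j') ^ (move y j j' j'))⁻¹) ∧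
      -- (vi) arrival of a distinguished customer paired with its exit
      (∀ p, w y n * (ξ p * gamBar p (n p)) = w (bump y p) n * η p) :=
  zero_range_open_closed_detailed_balance_general Λ N gam hgam gamBar hgamBar β θ ε τ ξ η hξ hη hβ
    hθ hε h411 w hw
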